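/- arXiv:1701.03903 — 5 statements merged into one kernel-verified Lean document; each statement's English description precedes it below -/
import Mathlib

section
/- Let $k,n\in\mathbb{N}$ with $n>2$ and let $R\in\mathbb{R}$ with $R>n$. Then there do not exist families $\mathcal{V}_1,\dots,\mathcal{V}_k$ of subsets of $\mathbb{Z}^k$ (with the maximum metric) such that each $\mathcal{V}_i$ is $n$-disjoint and $R$-bounded and $\bigcup_{i=1}^k \mathcal{V}_i$ covers $[-R,R]^k\cap\mathbb{Z}^k$. -/
noncomputable section
open Metric Set
open scoped ENNReal

/-- A family of subsets is `R`-bounded if every member has diameter at most `R`. -/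
def RBounded {X : Type*} [PseudoMetricSpace X] (R : ℝ) (U : Set (Set X)) : Prop :=
  ∀ A ∈ U, ∀ x ∈ A, ∀ y ∈ A, dist x y ≤ R

/-- A family of subsets is `r`-disjoint if distinct members are at distance at least `r`. -/
def RDisjoint {X : Type*} [PseudoMetricSpace X] (r : ℝ) (U : Set (Set X)) : Prop :=
  ∀ A ∈ U, ∀ B ∈ U, A ≠ B → ∀ x ∈ A, ∀ y ∈ B, r ≤ dist x y

/-- A family of subsets is uniformly bounded if it is `R`-bounded for some `R`. -/
def UniformlyBounded {X : Type*} [PseudoMetricSpace X] (U : Set (Set X)) : Prop :=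
  ∃ R : ℝ, RBounded R U

/-- `asdim X ≤ n`: for every `r > 0` there are `n+1` uniformly bounded, `r`-disjoint
families of subsets of `X` whose union covers `X`. -/
def AsdimLE (X : Type*) [PseudoMetricSpace X] (n : ℕ) : Prop :=
  ∀ r : ℝ, 0 < r → ∃ U : Fin (n + 1) → Set (Set X),
    (∀ i, UniformlyBounded (U i)) ∧ (∀ i, RDisjoint r (U i)) ∧
    (Set.univ : Set X) ⊆ ⋃ i, ⋃₀ U i

/-!
Shift the cube to `{0, …, M}^k`, `M = 2⌊R⌋`, and label each lattice point `x` by a pair `(i, s)`: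
`i` is a colour such that a member `U ∈ V i` contains `x`, and `s` records whether `U` meets the
face `x i = 0`. Members of `V i` are more than `1` apart, so king-adjacent points of colour `i` lie
in the same member and never carry both `(i, true)` and `(i, false)`; members have diameter
`< M`, so `(i, true)` forces `x i < M`; and a point with `x i = 0` is never labelled `(i, false)`.

Such a labelling cannot exist (a discrete Poincaré–Miranda theorem), by Sperner's door-counting
argument on Kuhn's triangulation of the faces `{x | x a = M for a ∉ D}`. An `n`-simplex of such a
face (`|D| = n`) is fully labelled if its vertices carry the labels `(a, false)` for
`a ∈ D ∪ {m}`, `m ∉ D`; a door is a facet whose vertices carry the labels `(a, false)`, `a ∈ D`.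
Inside each simplex the doors and the fully labelled simplex pair up, and across facets the
`(n + 1)`-dimensional doors pair up with each other and with the fully labelled `n`-simplices.
Hence the number of fully labelled `n`-simplices has the same parity for all `n`, yet it is `1`
for `n = 0` (the corner `(M, …, M)`) and `0` for `n = k`.
-/

open Function

def IsFixedPointFreeInvolutionOn {α : Type*} (f : α → α) (s : Set α) : Prop :=
  ∀ x ∈ s, f x ∈ s ∧ f (f x) = x ∧ f x ≠ x

theorem IsFixedPointFreeInvolutionOn.even_ncard {α : Type*} {f : α → α} {s : Set α}
    (hf : IsFixedPointFreeInvolutionOn f s) (hs : s.Finite) : Even s.ncard := by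
  lift s to Finset α using hs
  have hsum : ∑ _x ∈ s, (1 : ZMod 2) = 0 :=
    Finset.sum_involution (fun x _ => f x) (fun _ _ => by decide) (fun x hx _ => (hf x hx).2.2)
      (fun x hx => (hf x hx).1) (fun x hx => (hf x hx).2.1)
  rw [Finset.sum_const, nsmul_one, ZMod.natCast_eq_zero_iff_even] at hsum
  rwa [ncard_coe_finset]

theorem ncard_image_inl_union_image_inr {α β : Type*} {s : Set α} {t : Set β} (hs : s.Finite)
    (ht : t.Finite) :
    (Sum.inl '' s ∪ Sum.inr '' t : Set (α ⊕ β)).ncard = s.ncard + t.ncard := by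
  rw [ncard_union_eq disjoint_image_inl_image_inr (hs.image _) (ht.image _),
    ncard_image_of_injective _ Sum.inl_injective, ncard_image_of_injective _ Sum.inr_injective]

theorem insert_prod_singleton {α β : Type*} (a : α) (s : Set α) (b : β) :
    insert a s ×ˢ {b} = insert (a, b) (s ×ˢ ({b} : Set β)) := by
  ext ⟨x, y⟩
  simp only [mem_prod, mem_insert_iff, mem_singleton_iff, Prod.mk.injEq]
  tauto

theorem Set.BijOn.sdiff_singleton_of_apply_eq {α β : Type*} {f : α → β} {s : Set α} {t : Set β}
    {a b : α} (h : BijOn f (s \ {a}) t) (ha : a ∈ s) (hb : b ∈ s) (hab : f a = f b) :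
    BijOn f (s \ {b}) t := by
  rcases eq_or_ne a b with rfl | hne
  · exact h
  have hb' : b ∈ s \ {a} := ⟨hb, hne.symm⟩
  have key := (h.sdiff_singleton hb').insert (a := a) (by simp [hab])
  rw [hab, insert_sdiff_self_of_mem (h.mapsTo hb')] at key
  convert key using 1
  ext x
  simp only [mem_sdiff, mem_singleton_iff, mem_insert_iff]
  constructor
  · rintro ⟨hx, hxb⟩
    by_cases hxa : x = a <;> simp [*]
  · rintro (rfl | ⟨⟨hx, -⟩, hxb⟩)
    exacts [⟨ha, hne⟩, ⟨hx, hxb⟩]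

theorem Function.Injective.comp_swap_ne {α β : Type*} [DecidableEq α] {f : α → β}
    (hf : Injective f) {a b : α} (hab : a ≠ b) : f ∘ Equiv.swap a b ≠ f :=
  fun h => hab (hf (by simpa using congrFun h a)).symm

theorem bijOn_add_one_Iic (n : ℕ) : BijOn (· + 1) (Iic n) (Iic (n + 1) \ {0}) := by
  refine ⟨fun s hs => ?_, fun s _ s' _ h => Nat.succ_injective h, fun s hs => ⟨s - 1, ?_, ?_⟩⟩ <;>
    simp only [mem_sdiff, mem_Iic, mem_singleton_iff] at * <;> omega

theorem bijOn_sub_one_Iic (n : ℕ) : BijOn (· - 1) (Iic (n + 1) \ {0}) (Iic n) := by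
  refine ⟨fun s hs => ?_, fun s hs s' hs' h => ?_, fun s hs => ⟨s + 1, ?_, ?_⟩⟩ <;>
    simp only [mem_sdiff, mem_Iic, mem_singleton_iff] at * <;> omega

theorem Iic_succ_sdiff_singleton (n : ℕ) : Iic (n + 1) \ {n + 1} = Iic n := by
  ext s
  simp only [mem_sdiff, mem_Iic, mem_singleton_iff]
  omega

theorem RDisjoint.eq_of_dist_lt {X : Type*} [PseudoMetricSpace X] {r : ℝ} {U : Set (Set X)}
    (h : RDisjoint r U) {A B : Set X} (hA : A ∈ U) (hB : B ∈ U) {x y : X} (hx : x ∈ A)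
    (hy : y ∈ B) (hxy : dist x y < r) : A = B := by
  by_contra hne
  exact (h A hA B hB hne x hx y hy).not_gt hxy

theorem RBounded.apply_sub_apply_le {k : ℕ} {R : ℝ} {U : Set (Set (Fin k → ℤ))}
    (h : RBounded R U) {A : Set (Fin k → ℤ)} (hA : A ∈ U) {x z : Fin k → ℤ} (hx : x ∈ A)
    (hz : z ∈ A) (i : Fin k) : ((x i - z i : ℤ) : ℝ) ≤ R := by
  have := (dist_le_pi_dist x z i).trans (h A hA x hx z hz)
  rw [Int.dist_eq, ← Int.cast_sub] at this
  exact (le_abs_self _).trans this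

def intCube (k : ℕ) (M : ℤ) : Set (Fin k → ℤ) := univ.pi fun _ => Icc 0 M

theorem finite_intCube (k : ℕ) (M : ℤ) : (intCube k M).Finite :=
  Finite.pi fun _ => finite_Icc 0 M

section KuhnVertex

variable {k n : ℕ}

def kuhnVertex (y : Fin k → ℤ) (d : Fin n → Fin k) (t : ℕ) : Fin k → ℤ :=
  y + ∑ s : Fin n, if (s : ℕ) < t then Pi.single (d s) 1 else 0

@[simp]
theorem kuhnVertex_zero (y : Fin k → ℤ) (d : Fin n → Fin k) : kuhnVertex y d 0 = y := by
  simp [kuhnVertex]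

@[simp]
theorem kuhnVertex_of_fin_zero (y : Fin k → ℤ) (d : Fin 0 → Fin k) (t : ℕ) :
    kuhnVertex y d t = y := by
  simp [kuhnVertex]

theorem kuhnVertex_cons_succ (y : Fin k → ℤ) (a : Fin k) (d : Fin n → Fin k) (t : ℕ) :
    kuhnVertex y (Fin.cons a d) (t + 1) = kuhnVertex (y + Pi.single a 1) d t := by
  simp [kuhnVertex, Fin.sum_univ_succ, add_assoc]

theorem kuhnVertex_snoc (y : Fin k → ℤ) (d : Fin n → Fin k) (a : Fin k) {t : ℕ} (ht : t ≤ n) :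
    kuhnVertex y (Fin.snoc d a) t = kuhnVertex y d t := by
  simp [kuhnVertex, Fin.sum_univ_castSucc, ht.not_gt]

theorem kuhnVertex_comp_swap (y : Fin k → ℤ) (d : Fin n → Fin k) {i j : Fin n} {t : ℕ}
    (h : (i : ℕ) < t ↔ (j : ℕ) < t) :
    kuhnVertex y (d ∘ Equiv.swap i j) t = kuhnVertex y d t := by
  refine congrArg (y + ·) (Fintype.sum_equiv (Equiv.swap i j) _ _ fun s => ?_)
  rcases eq_or_ne s i with rfl | hi
  · simp [h]
  rcases eq_or_ne s j with rfl | hj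
  · simp [h]
  simp [Equiv.swap_apply_of_ne_of_ne hi hj]

theorem kuhnVertex_comp_finRotate (y : Fin k → ℤ) (d : Fin (n + 1) → Fin k) {t : ℕ}
    (ht : t ≤ n) :
    kuhnVertex (y + Pi.single (d 0) 1) (d ∘ finRotate (n + 1)) t = kuhnVertex y d (t + 1) := by
  have hrot : d ∘ finRotate (n + 1) = Fin.snoc (Fin.tail d) (d 0) := by
    rw [Fin.snoc_eq_cons_rotate, Fin.cons_self_tail]
    rfl
  rw [hrot, kuhnVertex_snoc _ _ _ ht, ← kuhnVertex_cons_succ, Fin.cons_self_tail]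

theorem kuhnVertex_comp_finRotate_symm (y : Fin k → ℤ) (d : Fin (n + 1) → Fin k) {t : ℕ}
    (ht₀ : 0 < t) (ht : t ≤ n + 1) :
    kuhnVertex (y - Pi.single (d (Fin.last n)) 1) (d ∘ (finRotate (n + 1)).symm) t =
      kuhnVertex y d (t - 1) := by
  have h := kuhnVertex_comp_finRotate (y - Pi.single (d (Fin.last n)) 1)
    (d ∘ (finRotate (n + 1)).symm) (t := t - 1) (by omega)
  have h0 : (finRotate (n + 1)).symm 0 = Fin.last n := by
    rw [Equiv.symm_apply_eq, finRotate_last]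
  simp only [comp_apply, h0, sub_add_cancel, comp_assoc, Equiv.symm_comp_self, comp_id,
    Nat.sub_add_cancel ht₀] at h
  exact h.symm

theorem kuhnVertex_apply_of_notMem (y : Fin k → ℤ) (d : Fin n → Fin k) (t : ℕ) {a : Fin k}
    (ha : a ∉ range d) : kuhnVertex y d t a = y a := by
  simp only [kuhnVertex, Pi.add_apply, Finset.sum_apply]
  rw [Finset.sum_eq_zero, add_zero]
  intro s _
  have : a ≠ d s := fun h => ha ⟨s, h.symm⟩
  split_ifs <;> simp [this]

theorem kuhnVertex_apply_self (y : Fin k → ℤ) {d : Fin n → Fin k} (hd : Injective d) (t : ℕ)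
    (s : Fin n) : kuhnVertex y d t (d s) = y (d s) + if (s : ℕ) < t then 1 else 0 := by
  simp only [kuhnVertex, Pi.add_apply, Finset.sum_apply]
  rw [Finset.sum_eq_single s]
  · split_ifs <;> simp
  · intro s' _ hs'
    split_ifs <;> simp [hd.ne hs'.symm]
  · simp

theorem kuhnVertex_apply_sub_mem_Icc (y : Fin k → ℤ) {d : Fin n → Fin k} (hd : Injective d)
    (t : ℕ) (a : Fin k) : kuhnVertex y d t a - y a ∈ Icc 0 1 := by
  by_cases ha : a ∈ range d
  · obtain ⟨s, rfl⟩ := ha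
    rw [kuhnVertex_apply_self y hd]
    split_ifs <;> simp
  · simp [kuhnVertex_apply_of_notMem y d t ha]

theorem abs_kuhnVertex_sub_kuhnVertex_le (y : Fin k → ℤ) {d : Fin n → Fin k} (hd : Injective d)
    (s t : ℕ) (a : Fin k) : |kuhnVertex y d s a - kuhnVertex y d t a| ≤ 1 := by
  have hs := kuhnVertex_apply_sub_mem_Icc y hd s a
  have ht := kuhnVertex_apply_sub_mem_Icc y hd t a
  simp only [mem_Icc] at hs ht
  rw [abs_le]
  omega

end KuhnVertex

/-- `(y, d)` is a simplex of Kuhn's triangulation of the face of `intCube k M` on which the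
coordinates outside `range d` equal `M`. -/
structure IsKuhnSimplex {k n : ℕ} (M : ℤ) (y : Fin k → ℤ) (d : Fin n → Fin k) : Prop where
  injective : Injective d
  apply_of_notMem : ∀ a ∉ range d, y a = M
  apply_mem_Ico : ∀ s, y (d s) ∈ Ico 0 M

namespace IsKuhnSimplex

variable {k n : ℕ} {M : ℤ} {y : Fin k → ℤ} {d : Fin n → Fin k}

theorem kuhnVertex_mem_intCube (h : IsKuhnSimplex M y d) (hM : 0 ≤ M) (t : ℕ) :
    kuhnVertex y d t ∈ intCube k M := by
  intro a _
  by_cases ha : a ∈ range d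
  · obtain ⟨s, rfl⟩ := ha
    have hy := h.apply_mem_Ico s
    have hv := kuhnVertex_apply_sub_mem_Icc y h.injective t (d s)
    simp only [mem_Icc, mem_Ico] at hy hv ⊢
    omega
  · rw [kuhnVertex_apply_of_notMem _ _ _ ha, h.apply_of_notMem a ha]
    exact ⟨hM, le_rfl⟩

theorem comp_perm (h : IsKuhnSimplex M y d) (σ : Equiv.Perm (Fin n)) :
    IsKuhnSimplex M y (d ∘ σ) where
  injective := h.injective.comp σ.injective
  apply_of_notMem a ha := h.apply_of_notMem a (by rwa [σ.surjective.range_comp] at ha)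
  apply_mem_Ico s := h.apply_mem_Ico (σ s)

theorem add_single (h : IsKuhnSimplex M y d) (s : Fin n) {c : ℤ} (hc : y (d s) + c ∈ Ico 0 M) :
    IsKuhnSimplex M (y + Pi.single (d s) c) d where
  injective := h.injective
  apply_of_notMem a ha := by
    have : a ≠ d s := fun h => ha ⟨s, h.symm⟩
    simp [this, h.apply_of_notMem a ha]
  apply_mem_Ico s' := by
    rcases eq_or_ne s' s with rfl | hs
    · simpa using hc
    · simpa [h.injective.ne hs] using h.apply_mem_Ico s'

theorem cons (h : IsKuhnSimplex M y d) (hM : 0 < M) {m : Fin k} (hm : m ∉ range d) :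
    IsKuhnSimplex M (y - Pi.single m 1) (Fin.cons m d : Fin (n + 1) → Fin k) where
  injective := Fin.cons_injective_iff.2 ⟨hm, h.injective⟩
  apply_of_notMem a ha := by
    simp only [Fin.range_cons, mem_insert_iff, not_or] at ha
    simp [ha.1, h.apply_of_notMem a ha.2]
  apply_mem_Ico s := by
    refine Fin.cases ?_ (fun s => ?_) s
    · simp only [Fin.cons_zero, Pi.sub_apply, Pi.single_eq_same, h.apply_of_notMem m hm, mem_Ico]
      omega
    · have : d s ≠ m := fun h => hm ⟨s, h⟩
      simpa [this] using h.apply_mem_Ico s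

theorem tail {d : Fin (n + 1) → Fin k} (h : IsKuhnSimplex M y d) (htop : y (d 0) + 1 = M) :
    IsKuhnSimplex M (y + Pi.single (d 0) 1) (Fin.tail d) where
  injective := h.injective.comp (Fin.succ_injective n)
  apply_of_notMem a ha := by
    rcases eq_or_ne a (d 0) with rfl | h0
    · simpa using htop
    · have : a ∉ range d := by
        rw [← Fin.cons_self_tail d, Fin.range_cons]
        simp [h0, ha]
      simp [h0, h.apply_of_notMem a this]
  apply_mem_Ico s := by
    have : d s.succ ≠ d 0 := h.injective.ne (Fin.succ_ne_zero s)
    simpa [Fin.tail, this] using h.apply_mem_Ico s.succ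

end IsKuhnSimplex

section Doors

variable {k : ℕ} (lab : (Fin k → ℤ) → Fin k × Bool) (M : ℤ)

def NoComplementaryEdge : Prop :=
  ∀ x ∈ intCube k M, ∀ x' ∈ intCube k M, (∀ a, |x a - x' a| ≤ 1) →
    ∀ i, lab x = (i, true) → lab x' ≠ (i, false)

/-- `(y, d, t)` stands for the facet of the Kuhn simplex `(y, d)` opposite its vertex `t`. -/
structure IsDoor {n : ℕ} (y : Fin k → ℤ) (d : Fin n → Fin k) (t : ℕ) : Prop where
  isKuhnSimplex : IsKuhnSimplex M y d
  le : t ≤ n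
  bijOn : BijOn (lab ∘ kuhnVertex y d) (Iic n \ {t}) (range d ×ˢ {false})

structure IsFullyLabelled {n : ℕ} (m : Fin k) (y : Fin k → ℤ) (d : Fin n → Fin k) : Prop where
  isKuhnSimplex : IsKuhnSimplex M y d
  notMem : m ∉ range d
  bijOn : BijOn (lab ∘ kuhnVertex y d) (Iic n) (insert m (range d) ×ˢ {false})

def doors (n : ℕ) : Set ((Fin k → ℤ) × (Fin n → Fin k) × ℕ) :=
  {p | IsDoor lab M p.1 p.2.1 p.2.2}

def fullyLabelled (n : ℕ) : Set (Fin k × (Fin k → ℤ) × (Fin n → Fin k)) :=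
  {p | IsFullyLabelled lab M p.1 p.2.1 p.2.2}

variable {lab M}

theorem finite_doors (hM : 0 ≤ M) (n : ℕ) : (doors lab M n).Finite := by
  refine ((finite_intCube k M).prod (finite_univ.prod (finite_Iic n))).subset ?_
  rintro ⟨y, d, t⟩ hD
  exact ⟨by simpa using hD.isKuhnSimplex.kuhnVertex_mem_intCube hM 0, mem_univ _, hD.le⟩

theorem finite_fullyLabelled (hM : 0 ≤ M) (n : ℕ) : (fullyLabelled lab M n).Finite := by
  refine (finite_univ.prod ((finite_intCube k M).prod finite_univ)).subset ?_
  rintro ⟨m, y, d⟩ hA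
  exact ⟨mem_univ _, by simpa using hA.isKuhnSimplex.kuhnVertex_mem_intCube hM 0, mem_univ _⟩

variable {n : ℕ} {y : Fin k → ℤ} {d : Fin n → Fin k} {t : ℕ}

theorem IsDoor.snd_label_eq_false (hM : 0 ≤ M)
    (h_true : ∀ x ∈ intCube k M, ∀ i, lab x = (i, true) → x i < M)
    (hno : NoComplementaryEdge lab M) (hD : IsDoor lab M y d t) :
    (lab (kuhnVertex y d t)).2 = false := by
  have hmem := hD.isKuhnSimplex.kuhnVertex_mem_intCube hM
  rcases hlab : lab (kuhnVertex y d t) with ⟨i, _ | _⟩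
  · rfl
  by_cases hi : i ∈ range d
  · obtain ⟨s, -, hs⟩ := hD.bijOn.surjOn (mk_mem_prod hi rfl : (i, false) ∈ range d ×ˢ {false})
    exact absurd hs (hno _ (hmem t) _ (hmem s)
      (abs_kuhnVertex_sub_kuhnVertex_le y hD.isKuhnSimplex.injective t s) i hlab)
  · have := h_true _ (hmem t) i hlab
    rw [kuhnVertex_apply_of_notMem _ _ _ hi, hD.isKuhnSimplex.apply_of_notMem i hi] at this
    exact absurd this (lt_irrefl M)

theorem IsDoor.of_label_eq (hD : IsDoor lab M y d t) {t' : ℕ} (ht' : t' ≤ n)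
    (hlab : lab (kuhnVertex y d t) = lab (kuhnVertex y d t')) : IsDoor lab M y d t' :=
  ⟨hD.isKuhnSimplex, ht', hD.bijOn.sdiff_singleton_of_apply_eq hD.le ht' hlab⟩

theorem IsDoor.isFullyLabelled (hD : IsDoor lab M y d t)
    (hsnd : (lab (kuhnVertex y d t)).2 = false) (hfst : (lab (kuhnVertex y d t)).1 ∉ range d) :
    IsFullyLabelled lab M (lab (kuhnVertex y d t)).1 y d := by
  refine ⟨hD.isKuhnSimplex, hfst, ?_⟩
  have key := hD.bijOn.insert (a := t) (by simp [hfst])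
  rwa [insert_sdiff_self_of_mem (mem_Iic.2 hD.le), comp_apply, ← Prod.mk.eta (p := lab _), hsnd,
    ← insert_prod_singleton] at key

theorem IsFullyLabelled.isDoor {m : Fin k} (hA : IsFullyLabelled lab M m y d) (ht : t ≤ n)
    (hlab : lab (kuhnVertex y d t) = (m, false)) : IsDoor lab M y d t := by
  refine ⟨hA.isKuhnSimplex, ht, ?_⟩
  have key := hA.bijOn.sdiff_singleton (mem_Iic.2 ht)
  rwa [comp_apply, hlab, insert_prod_singleton, insert_sdiff_self_of_notMem (by simp [hA.notMem])]
    at key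

end Doors

section Pivots

variable {k n : ℕ} {lab : (Fin k → ℤ) → Fin k × Bool} {M : ℤ} {y : Fin k → ℤ}

theorem IsDoor.apply_last_pos {d : Fin (n + 1) → Fin k} (hM : 0 ≤ M)
    (h_false : ∀ x ∈ intCube k M, ∀ i, lab x = (i, false) → 0 < x i)
    (hD : IsDoor lab M y d (n + 1)) : 0 < y (d (Fin.last n)) := by
  obtain ⟨s, ⟨hs, hsn⟩, hlab⟩ := hD.bijOn.surjOn
    (mk_mem_prod (mem_range_self (Fin.last n)) rfl : (d (Fin.last n), false) ∈ range d ×ˢ {false})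
  have := h_false _ (hD.isKuhnSimplex.kuhnVertex_mem_intCube hM s) _ hlab
  simp only [mem_Iic, mem_singleton_iff] at hs hsn
  rwa [kuhnVertex_apply_self _ hD.isKuhnSimplex.injective, Fin.val_last, if_neg (by omega),
    add_zero] at this

theorem IsDoor.isFullyLabelled_tail {d : Fin (n + 1) → Fin k} (hD : IsDoor lab M y d 0)
    (htop : y (d 0) + 1 = M) :
    IsFullyLabelled lab M (d 0) (y + Pi.single (d 0) 1) (Fin.tail d) := by
  refine ⟨hD.isKuhnSimplex.tail htop, fun ⟨s, hs⟩ => Fin.succ_ne_zero s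
    (hD.isKuhnSimplex.injective hs), ?_⟩
  rw [← Fin.range_cons, Fin.cons_self_tail]
  refine (hD.bijOn.comp (bijOn_add_one_Iic n)).congr fun s _ => ?_
  simp [← kuhnVertex_cons_succ, Fin.cons_self_tail]

theorem IsDoor.comp_finRotate {d : Fin (n + 1) → Fin k} (hD : IsDoor lab M y d 0)
    (htop : y (d 0) + 1 ≠ M) :
    IsDoor lab M (y + Pi.single (d 0) 1) (d ∘ finRotate (n + 1)) (n + 1) := by
  have hy := hD.isKuhnSimplex.apply_mem_Ico 0
  have hy' : y (d 0) + 1 ∈ Ico 0 M :=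
    ⟨by linarith [hy.1], (Int.add_one_le_of_lt hy.2).lt_of_ne htop⟩
  refine ⟨(hD.isKuhnSimplex.add_single 0 hy').comp_perm _, le_rfl, ?_⟩
  rw [(finRotate _).surjective.range_comp, Iic_succ_sdiff_singleton]
  refine (hD.bijOn.comp (bijOn_add_one_Iic n)).congr fun s hs => ?_
  simp [kuhnVertex_comp_finRotate y d (mem_Iic.1 hs)]

theorem IsDoor.comp_finRotate_symm {d : Fin (n + 1) → Fin k} (hD : IsDoor lab M y d (n + 1))
    (hpos : 0 < y (d (Fin.last n))) :
    IsDoor lab M (y - Pi.single (d (Fin.last n)) 1) (d ∘ (finRotate (n + 1)).symm) 0 := by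
  have hy := hD.isKuhnSimplex.apply_mem_Ico (Fin.last n)
  have hs := (hD.isKuhnSimplex.add_single (Fin.last n) (c := -1)
    ⟨by linarith, by linarith [hy.2]⟩).comp_perm (finRotate (n + 1)).symm
  rw [Pi.single_neg, ← sub_eq_add_neg] at hs
  refine ⟨hs, Nat.zero_le _, ?_⟩
  have hbij := hD.bijOn
  rw [Iic_succ_sdiff_singleton] at hbij
  rw [(finRotate _).symm.surjective.range_comp]
  refine (hbij.comp (bijOn_sub_one_Iic n)).congr fun s hs => ?_
  simp only [mem_sdiff, mem_Iic, mem_singleton_iff] at hs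
  simp [kuhnVertex_comp_finRotate_symm y d (Nat.pos_of_ne_zero hs.2) hs.1]

theorem IsDoor.comp_swap {d : Fin (n + 1) → Fin k} {t : ℕ} (hD : IsDoor lab M y d t)
    (ht : t ≠ n + 1) :
    IsDoor lab M y (d ∘ Equiv.swap (Fin.ofNat (n + 1) (t - 1)) (Fin.ofNat (n + 1) t)) t := by
  refine ⟨hD.isKuhnSimplex.comp_perm _, hD.le, ?_⟩
  rw [(Equiv.swap _ _).surjective.range_comp]
  refine hD.bijOn.congr fun s hs => ?_
  have htn := hD.le
  simp only [mem_sdiff, mem_singleton_iff] at hs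
  rw [comp_apply, comp_apply, kuhnVertex_comp_swap]
  rw [Fin.val_ofNat, Fin.val_ofNat, Nat.mod_eq_of_lt (by omega), Nat.mod_eq_of_lt (by omega)]
  omega

theorem IsFullyLabelled.isDoor_cons {m : Fin k} {d : Fin n → Fin k}
    (hA : IsFullyLabelled lab M m y d) (hM : 0 < M) :
    IsDoor lab M (y - Pi.single m 1) (Fin.cons m d) 0 := by
  refine ⟨hA.isKuhnSimplex.cons hM hA.notMem, Nat.zero_le _, ?_⟩
  rw [Fin.range_cons]
  refine (hA.bijOn.comp (bijOn_sub_one_Iic n)).congr fun s hs => ?_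
  simp only [mem_sdiff, mem_singleton_iff] at hs
  obtain ⟨s, rfl⟩ := Nat.exists_eq_add_one.2 (Nat.pos_of_ne_zero hs.2)
  simp [kuhnVertex_cons_succ]

end Pivots

section Matchings

variable {k : ℕ}

open Classical in
/-- Pairs a door with the other door of its simplex whose dropped vertex has the same label, or,
if that label is new, with the simplex as a fully labelled one. -/
def matchInSimplex (lab : (Fin k → ℤ) → Fin k × Bool) (n : ℕ) :
    ((Fin k → ℤ) × (Fin n → Fin k) × ℕ) ⊕ (Fin k × (Fin k → ℤ) × (Fin n → Fin k)) →
      ((Fin k → ℤ) × (Fin n → Fin k) × ℕ) ⊕ (Fin k × (Fin k → ℤ) × (Fin n → Fin k))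
  | .inl (y, d, t) =>
    if (lab (kuhnVertex y d t)).1 ∈ range d then
      .inl (y, d, invFunOn (lab ∘ kuhnVertex y d) (Iic n \ {t}) (lab (kuhnVertex y d t)))
    else .inr ((lab (kuhnVertex y d t)).1, y, d)
  | .inr (m, y, d) => .inl (y, d, invFunOn (lab ∘ kuhnVertex y d) (Iic n) (m, false))

/-- Pairs a door with the door of the other Kuhn simplex sharing it (pivoting), or, if the door
lies in the face `x (d 0) = M`, with the fully labelled simplex of that face it is. -/
def matchAcrossFacet (M : ℤ) (n : ℕ) :
    ((Fin k → ℤ) × (Fin (n + 1) → Fin k) × ℕ) ⊕ (Fin k × (Fin k → ℤ) × (Fin n → Fin k)) →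
      ((Fin k → ℤ) × (Fin (n + 1) → Fin k) × ℕ) ⊕ (Fin k × (Fin k → ℤ) × (Fin n → Fin k))
  | .inl (y, d, t) =>
    if t = 0 then
      if y (d 0) + 1 = M then .inr (d 0, y + Pi.single (d 0) 1, Fin.tail d)
      else .inl (y + Pi.single (d 0) 1, d ∘ finRotate (n + 1), n + 1)
    else if t = n + 1 then
      .inl (y - Pi.single (d (Fin.last n)) 1, d ∘ (finRotate (n + 1)).symm, 0)
    else .inl (y, d ∘ Equiv.swap (Fin.ofNat (n + 1) (t - 1)) (Fin.ofNat (n + 1) t), t)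
  | .inr (m, y, d) => .inl (y - Pi.single m 1, Fin.cons m d, 0)

variable {lab : (Fin k → ℤ) → Fin k × Bool} {M : ℤ} {n : ℕ}

theorem isFixedPointFreeInvolutionOn_matchInSimplex (hM : 0 ≤ M)
    (h_true : ∀ x ∈ intCube k M, ∀ i, lab x = (i, true) → x i < M)
    (hno : NoComplementaryEdge lab M) :
    IsFixedPointFreeInvolutionOn (matchInSimplex lab n)
      (Sum.inl '' doors lab M n ∪ Sum.inr '' fullyLabelled lab M n) := by
  rintro _ (⟨⟨y, d, t⟩, hD, rfl⟩ | ⟨⟨m, y, d⟩, hA, rfl⟩)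
  · have hsnd := hD.snd_label_eq_false hM h_true hno
    by_cases hfst : (lab (kuhnVertex y d t)).1 ∈ range d
    · have hex : ∃ t' ∈ Iic n \ {t}, (lab ∘ kuhnVertex y d) t' = lab (kuhnVertex y d t) :=
        hD.bijOn.surjOn ⟨hfst, hsnd⟩
      obtain ⟨⟨ht'n, ht't⟩, hlab⟩ := invFunOn_pos hex
      set t' := invFunOn (lab ∘ kuhnVertex y d) (Iic n \ {t}) (lab (kuhnVertex y d t))
      have hD' : IsDoor lab M y d t' := hD.of_label_eq ht'n hlab.symm
      have hback : invFunOn (lab ∘ kuhnVertex y d) (Iic n \ {t'}) (lab (kuhnVertex y d t)) = t :=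
        hD'.bijOn.injOn.leftInvOn_invFunOn ⟨mem_Iic.2 hD.le, Ne.symm ht't⟩
      simp only [comp_apply] at hlab
      have hfwd : matchInSimplex lab n (.inl (y, d, t)) = .inl (y, d, t') := by
        rw [matchInSimplex, if_pos hfst]
      have hbwd : matchInSimplex lab n (.inl (y, d, t')) = .inl (y, d, t) := by
        rw [matchInSimplex, hlab, if_pos hfst, hback]
      rw [hfwd, hbwd]
      exact ⟨Or.inl ⟨_, hD', rfl⟩, rfl, by simpa using ht't⟩
    · have hA := hD.isFullyLabelled hsnd hfst
      have hback : invFunOn (lab ∘ kuhnVertex y d) (Iic n)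
          ((lab (kuhnVertex y d t)).1, false) = t := by
        rw [← hsnd]
        exact hA.bijOn.injOn.leftInvOn_invFunOn (mem_Iic.2 hD.le)
      simp only [matchInSimplex, if_neg hfst]
      exact ⟨Or.inr ⟨_, hA, rfl⟩, by simp [hback], Sum.inr_ne_inl⟩
  · obtain ⟨htn, hlab⟩ := invFunOn_pos (hA.bijOn.surjOn
      (by simp : (m, false) ∈ insert m (range d) ×ˢ {false}))
    simp only [matchInSimplex]
    refine ⟨Or.inl ⟨_, hA.isDoor htn hlab, rfl⟩, ?_, Sum.inl_ne_inr⟩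
    simp only [comp_apply] at hlab
    simp [hlab, hA.notMem]

theorem isFixedPointFreeInvolutionOn_matchAcrossFacet (hM : 0 < M)
    (h_false : ∀ x ∈ intCube k M, ∀ i, lab x = (i, false) → 0 < x i) :
    IsFixedPointFreeInvolutionOn (matchAcrossFacet M n)
      (Sum.inl '' doors lab M (n + 1) ∪ Sum.inr '' fullyLabelled lab M n) := by
  rintro _ (⟨⟨y, d, t⟩, hD, rfl⟩ | ⟨⟨m, y, d⟩, hA, rfl⟩)
  · change IsDoor lab M y d t at hD
    have hy := hD.isKuhnSimplex.apply_mem_Ico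
    rcases eq_or_ne t 0 with rfl | ht₀
    · by_cases htop : y (d 0) + 1 = M
      · simp only [matchAcrossFacet, if_pos htop]
        refine ⟨Or.inr ⟨_, hD.isFullyLabelled_tail htop, rfl⟩, ?_, Sum.inr_ne_inl⟩
        simp [Fin.cons_self_tail]
      · simp only [matchAcrossFacet, if_neg htop]
        refine ⟨Or.inl ⟨_, hD.comp_finRotate htop, rfl⟩, ?_, by simp⟩
        simp [comp_assoc]
    rcases eq_or_ne t (n + 1) with rfl | ht
    · have hpos := hD.apply_last_pos hM.le h_false
      have h0 : (finRotate (n + 1)).symm 0 = Fin.last n := by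
        rw [Equiv.symm_apply_eq, finRotate_last]
      simp only [matchAcrossFacet, if_neg ht₀]
      refine ⟨Or.inl ⟨_, hD.comp_finRotate_symm hpos, rfl⟩, ?_, by simp⟩
      simp [h0, (hy (Fin.last n)).2.ne, comp_assoc]
    · simp only [matchAcrossFacet, if_neg ht₀, if_neg ht]
      refine ⟨Or.inl ⟨_, hD.comp_swap ht, rfl⟩, ?_, ?_⟩
      · simp [comp_assoc, ← Equiv.coe_trans]
      · have htn := hD.le
        refine fun h => hD.isKuhnSimplex.injective.comp_swap_ne ?_ (by simpa using h)
        simp only [Ne, Fin.ext_iff, Fin.val_natCast, Nat.mod_eq_of_lt (show t - 1 < n + 1 by omega),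
          Nat.mod_eq_of_lt (show t < n + 1 by omega)]
        omega
  · change IsFullyLabelled lab M m y d at hA
    simp only [matchAcrossFacet]
    refine ⟨Or.inl ⟨_, hA.isDoor_cons hM, rfl⟩, ?_, Sum.inl_ne_inr⟩
    simp [hA.isKuhnSimplex.apply_of_notMem m hA.notMem]

end Matchings

section Counting

variable {k : ℕ} {lab : (Fin k → ℤ) → Fin k × Bool} {M : ℤ}

theorem even_ncard_doors_add_ncard_fullyLabelled (hM : 0 ≤ M)
    (h_true : ∀ x ∈ intCube k M, ∀ i, lab x = (i, true) → x i < M)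
    (hno : NoComplementaryEdge lab M) (n : ℕ) :
    Even ((doors lab M n).ncard + (fullyLabelled lab M n).ncard) := by
  rw [← ncard_image_inl_union_image_inr (finite_doors hM n) (finite_fullyLabelled hM n)]
  exact (isFixedPointFreeInvolutionOn_matchInSimplex hM h_true hno).even_ncard
    (((finite_doors hM n).image _).union ((finite_fullyLabelled hM n).image _))

theorem even_ncard_doors_succ_add_ncard_fullyLabelled (hM : 0 < M)
    (h_false : ∀ x ∈ intCube k M, ∀ i, lab x = (i, false) → 0 < x i) (n : ℕ) :
    Even ((doors lab M (n + 1)).ncard + (fullyLabelled lab M n).ncard) := by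
  rw [← ncard_image_inl_union_image_inr (finite_doors hM.le _) (finite_fullyLabelled hM.le n)]
  exact (isFixedPointFreeInvolutionOn_matchAcrossFacet hM h_false).even_ncard
    (((finite_doors hM.le _).image _).union ((finite_fullyLabelled hM.le n).image _))

theorem fullyLabelled_zero (hM : 0 ≤ M)
    (h_true : ∀ x ∈ intCube k M, ∀ i, lab x = (i, true) → x i < M) :
    fullyLabelled lab M 0 = {((lab fun _ => M).1, fun _ => M, Fin.elim0)} := by
  have hsnd : (lab fun _ => M).2 = false := by
    rcases hlab : lab fun _ => M with ⟨i, _ | _⟩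
    · rfl
    · exact absurd (h_true _ (fun _ _ => ⟨hM, le_rfl⟩) i hlab) (lt_irrefl M)
  ext ⟨m, y, d⟩
  simp only [mem_singleton_iff, Prod.mk.injEq]
  constructor
  · intro hA
    have hy : y = fun _ => M := funext fun a => hA.isKuhnSimplex.apply_of_notMem a (by simp)
    have := hA.bijOn.mapsTo (mem_Iic.2 le_rfl)
    simp only [hy, comp_apply, kuhnVertex_of_fin_zero, range_eq_empty, insert_empty_eq,
      singleton_prod_singleton, mem_singleton_iff] at this
    exact ⟨by simp [this], hy, Subsingleton.elim _ _⟩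
  · rintro ⟨rfl, rfl, rfl⟩
    refine ⟨⟨fun s => s.elim0, fun a _ => rfl, fun s => s.elim0⟩, by simp, ?_⟩
    rw [show Iic 0 = ({0} : Set ℕ) by ext; simp]
    simp [Prod.ext_iff, hsnd]

theorem fullyLabelled_eq_empty : fullyLabelled lab M k = ∅ :=
  eq_empty_of_forall_notMem fun ⟨m, _, _⟩ hA =>
    hA.notMem (Finite.surjective_of_injective hA.isKuhnSimplex.injective m)

end Counting

theorem exists_adjacent_labels_eq_true_and_false {k : ℕ} {M : ℤ} (hM : 0 < M)
    (lab : (Fin k → ℤ) → Fin k × Bool)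
    (h_true : ∀ x ∈ intCube k M, ∀ i, lab x = (i, true) → x i < M)
    (h_false : ∀ x ∈ intCube k M, ∀ i, lab x = (i, false) → 0 < x i) :
    ∃ x ∈ intCube k M, ∃ x' ∈ intCube k M, (∀ a, |x a - x' a| ≤ 1) ∧
      ∃ i, lab x = (i, true) ∧ lab x' = (i, false) := by
  by_contra hno
  push Not at hno
  have hodd : ∀ n, Odd (fullyLabelled lab M n).ncard := by
    intro n
    induction n with
    | zero => simp [fullyLabelled_zero hM.le h_true]
    | succ n ih =>
      have h₁ := even_ncard_doors_add_ncard_fullyLabelled hM.le h_true hno (n + 1)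
      have h₂ := even_ncard_doors_succ_add_ncard_fullyLabelled hM h_false n
      rw [Nat.even_add] at h₁ h₂
      rw [← Nat.not_even_iff_odd] at ih ⊢
      tauto
  simpa [fullyLabelled_eq_empty] using hodd k

theorem exists_labelling_of_subset_iUnion {k : ℕ} {m : ℤ} (hm : 0 ≤ m) {r R : ℝ} (hr : 1 < r)
    (hR : R < 2 * m) (V : Fin k → Set (Set (Fin k → ℤ))) (hdisj : ∀ i, RDisjoint r (V i))
    (hbdd : ∀ i, RBounded R (V i)) (hcov : {x : Fin k → ℤ | ∀ i, |x i| ≤ m} ⊆ ⋃ i, ⋃₀ V i) :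
    ∃ lab : (Fin k → ℤ) → Fin k × Bool,
      (∀ x ∈ intCube k (2 * m), ∀ i, lab x = (i, true) → x i < 2 * m) ∧
      (∀ x ∈ intCube k (2 * m), ∀ i, lab x = (i, false) → 0 < x i) ∧
      NoComplementaryEdge lab (2 * m) := by
  have hcover : ∀ x ∈ intCube k (2 * m), ∃ i, ∃ U ∈ V i, x - (fun _ => m) ∈ U := by
    intro x hx
    have hbox : x - (fun _ => m) ∈ {x : Fin k → ℤ | ∀ i, |x i| ≤ m} := fun i => by
      have := hx i (mem_univ i)
      simp only [mem_Icc] at this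
      rw [Pi.sub_apply, abs_le]
      omega
    simpa using hcov hbox
  obtain ⟨i₀, -⟩ := hcover 0 fun _ _ => ⟨le_rfl, by simp only [Pi.zero_apply]; omega⟩
  have : Nonempty (Fin k) := ⟨i₀⟩
  choose! c U hUV hxU using hcover
  classical
  refine ⟨fun x => (c x, decide (∃ z ∈ U x, z (c x) = -m)), ?_, ?_, ?_⟩
  · intro x hx i hlab
    simp only [Prod.mk.injEq, decide_eq_true_eq] at hlab
    obtain ⟨rfl, z, hz, hzi⟩ := hlab
    have := (hbdd (c x)).apply_sub_apply_le (hUV x hx) (hxU x hx) hz (c x)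
    rw [Pi.sub_apply, hzi, sub_neg_eq_add, sub_add_cancel] at this
    exact_mod_cast this.trans_lt hR
  · intro x hx i hlab
    simp only [Prod.mk.injEq, decide_eq_false_iff_not] at hlab
    obtain ⟨rfl, hno⟩ := hlab
    refine lt_of_le_of_ne (hx (c x) (mem_univ _)).1 fun h => hno ⟨_, hxU x hx, ?_⟩
    simp [← h]
  · intro x hx x' hx' hadj i hlab hlab'
    simp only [Prod.mk.injEq, decide_eq_true_eq, decide_eq_false_iff_not] at hlab hlab'
    obtain ⟨rfl, z, hz, hzi⟩ := hlab
    obtain ⟨hc, hno⟩ := hlab'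
    have hdist : dist (x - fun _ => m) (x' - fun _ => m) < r := by
      rw [dist_sub_right]
      refine lt_of_le_of_lt ((dist_pi_le_iff zero_le_one).2 fun a => ?_) hr
      rw [Int.dist_eq]
      exact_mod_cast hadj a
    have hsame := (hdisj (c x)).eq_of_dist_lt (hUV x hx) (hc ▸ hUV x' hx') (hxU x hx)
      (hxU x' hx') hdist
    exact hno ⟨z, hsame ▸ hz, hc ▸ hzi⟩

theorem not_subset_iUnion_of_rDisjoint_of_rBounded {k : ℕ} {m : ℤ} (hm : 0 < m) {r R : ℝ}
    (hr : 1 < r) (hR : R < 2 * m) (V : Fin k → Set (Set (Fin k → ℤ)))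
    (hdisj : ∀ i, RDisjoint r (V i)) (hbdd : ∀ i, RBounded R (V i)) :
    ¬ {x : Fin k → ℤ | ∀ i, |x i| ≤ m} ⊆ ⋃ i, ⋃₀ V i := by
  intro hcov
  obtain ⟨lab, h_true, h_false, hno⟩ :=
    exists_labelling_of_subset_iUnion hm.le hr hR V hdisj hbdd hcov
  obtain ⟨x, hx, x', hx', hadj, i, hlab, hlab'⟩ :=
    exists_adjacent_labels_eq_true_and_false (by omega) lab h_true h_false
  exact hno x hx x' hx' hadj i hlab hlab'

/-- Lemma 2.6: there are no `n`-disjoint, `R`-bounded families `V₁,…,V_k` in `ℤ^k`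
(with the maximum metric) covering `[-R,R]^k ∩ ℤ^k`, when `n > 2` and `R > n`. -/
theorem no_cover_of_cube (k n : ℕ) (hn : 2 < n) (R : ℝ) (hR : (n : ℝ) < R) :
    ¬ ∃ V : Fin k → Set (Set (Fin k → ℤ)),
      (∀ i, RDisjoint (n : ℝ) (V i)) ∧ (∀ i, RBounded R (V i)) ∧
      {x : Fin k → ℤ | ∀ i, |(x i : ℝ)| ≤ R} ⊆ ⋃ i, ⋃₀ V i := by
  rintro ⟨V, hdisj, hbdd, hcov⟩
  have hn₁ : (1 : ℝ) < n := by exact_mod_cast (by omega : 1 < n)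
  have hfloor : 0 < ⌊R⌋ := Int.floor_pos.2 (by linarith)
  have hfloor₁ : (1 : ℝ) ≤ ⌊R⌋ := by exact_mod_cast hfloor
  refine not_subset_iUnion_of_rDisjoint_of_rBounded hfloor hn₁ ?_ V hdisj hbdd
    fun x hx => hcov fun i => ?_
  · linarith [Int.lt_floor_add_one R]
  · have : |(x i : ℝ)| ≤ ⌊R⌋ := by exact_mod_cast hx i
    linarith [Int.floor_le R]
end
end

section
/- Let $X=\bigcup_{i=1}^{\infty}(i\mathbb{Z})^i$ with the metric $d(a,b)=\max\{d_{\max}(a',b),c\}$ described below. Then $\mathrm{coasdim}(X)\le fin+1$, i.e., for every $n\in\mathbb{N}$ there exists an $n$-disjoint uniformly bounded family $\mathcal{U}$ of subsets of $X$ such that $X\setminus\bigcup\mathcal{U}$ has finite asymptotic dimension. -/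
noncomputable section
open Metric Set
open scoped ENNReal

/-- `coasdim X ≤ fin + k`: for every `n > 0` there are `k` many `n`-disjoint, `R`-bounded
families whose complement has asymptotic dimension at most some `m`. -/
def CoasdimLE (X : Type*) [PseudoMetricSpace X] (k : ℕ) : Prop :=
  ∀ n : ℝ, 0 < n → ∃ (R : ℝ) (m : ℕ) (U : Fin k → Set (Set X)),
    (∀ i, RDisjoint n (U i)) ∧ (∀ i, RBounded R (U i)) ∧
    AsdimLE (↥((⋃ i, ⋃₀ U i)ᶜ : Set X)) m

/-- `TT l = l*(l-1)/2 = 1 + 2 + ⋯ + (l-1)`. -/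
def TT (l : ℕ) : ℕ := l * (l - 1) / 2

/-- A point of the space `⋃_{i≥1} ((s i)·ℤ)^i × ℤ^k`: a level `l ≥ 1`, coordinates
`coords 0, …, coords (l-1)` divisible by `s l` (zero beyond), and `k` free coordinates. -/
structure Pt (s : ℕ → ℕ) (k : ℕ) where
  level : ℕ
  coords : ℕ → ℤ
  extra : Fin k → ℤ
  level_pos : 1 ≤ level
  coords_eq_zero : ∀ i, level ≤ i → coords i = 0
  coords_dvd : ∀ i, i < level → (s level : ℤ) ∣ coords i

lemma Pt.memlp {s : ℕ → ℕ} {k : ℕ} (p : Pt s k) :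
    Memℓp (fun i => (p.coords i : ℝ)) ∞ := by
  apply memℓp_infty
  refine ⟨(((Finset.range p.level).sup fun i => (p.coords i).natAbs : ℕ) : ℝ), ?_⟩
  rintro r ⟨i, rfl⟩
  simp only [Real.norm_eq_abs, ← Int.cast_abs]
  by_cases hi : i < p.level
  · have h2 : |p.coords i| ≤ ((Finset.range p.level).sup fun i => (p.coords i).natAbs : ℕ) := by
      rw [Int.abs_eq_natAbs]
      exact_mod_cast Finset.le_sup (f := fun i => (p.coords i).natAbs) (Finset.mem_range.2 hi)
    exact_mod_cast h2
  · have h0 : p.coords i = 0 := p.coords_eq_zero i (not_lt.mp hi)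
    simp [h0]

/-- The isometric embedding defining the metric of the paper:
`d(a,b) = max (d_max a' b) c` with `c = |TT l₁ - TT l₂|`. -/
def Pt.F {s : ℕ → ℕ} {k : ℕ} (p : Pt s k) :
    (lp (fun _ : ℕ => ℝ) ∞) × (Fin k → ℝ) × ℝ :=
  (⟨fun i => (p.coords i : ℝ), p.memlp⟩, fun j => (p.extra j : ℝ), (TT p.level : ℝ))

instance (s : ℕ → ℕ) (k : ℕ) : PseudoMetricSpace (Pt s k) :=
  PseudoMetricSpace.induced Pt.F inferInstance

/-!
Take for `𝒰` the singletons of the points of level `> N`, where `N ≥ n`. Two distinct points of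
level `> N` are `n`-far apart: on a common level `l` they differ in a coordinate by a nonzero
multiple of `l`, and on levels `l < l'` the last coordinate of the embedding differs by
`TT l' - TT l ≥ l`. The complement lives on the finitely many levels `≤ N`; on each level it is
isometric to a subset of `ℤ^N` with the sup metric, and covering by cubes of side `r`, coloured by
level and by the parity of the cube index, gives finitely many `r`-disjoint bounded families.
-/

lemma TT_eq_choose (l : ℕ) : TT l = l.choose 2 := (Nat.choose_two_right l).symm

lemma TT_add_le_of_lt {a b : ℕ} (h : a < b) : TT a + a ≤ TT b := by
  calc TT a + a = TT (a + 1) := by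
        simp only [TT_eq_choose, Nat.choose_succ_succ, Nat.choose_one_right, add_comm]
    _ ≤ TT b := by simpa only [TT_eq_choose] using Nat.choose_mono 2 h

section Families

variable {X : Type*} [PseudoMetricSpace X]

lemma rBounded_image_singleton (S : Set X) : RBounded 0 ((fun x => ({x} : Set X)) '' S) := by
  rintro _ ⟨x, -, rfl⟩ _ rfl _ rfl
  simp

lemma rDisjoint_image_singleton {r : ℝ} {S : Set X} (h : S.Pairwise fun x y => r ≤ dist x y) :
    RDisjoint r ((fun x => ({x} : Set X)) '' S) := by
  rintro _ ⟨x, hx, rfl⟩ _ ⟨y, hy, rfl⟩ hne _ rfl _ rfl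
  exact h hx hy fun hxy => hne (hxy ▸ rfl)

lemma AsdimLE.of_finite {ι : Type*} [Finite ι] [Nonempty ι]
    (h : ∀ r : ℝ, 0 < r → ∃ U : ι → Set (Set X),
      (∀ i, UniformlyBounded (U i)) ∧ (∀ i, RDisjoint r (U i)) ∧ univ ⊆ ⋃ i, ⋃₀ U i) :
    AsdimLE X (Nat.card ι - 1) := by
  intro r hr
  obtain ⟨U, hbdd, hdisj, hcover⟩ := h r hr
  let e : Fin (Nat.card ι - 1 + 1) ≃ ι :=
    (finCongr (Nat.sub_add_cancel Nat.card_pos)).trans (Finite.equivFin ι).symm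
  exact ⟨U ∘ e, fun i => hbdd (e i), fun i => hdisj (e i),
    hcover.trans (e.surjective.iUnion_comp fun i => ⋃₀ U i).ge⟩

end Families

section FloorDiv

variable {a b r : ℝ}

lemma abs_sub_lt_of_floor_div_eq (hr : 0 < r) (h : ⌊a / r⌋ = ⌊b / r⌋) : |a - b| < r := by
  have := Int.abs_sub_lt_one_of_floor_eq_floor h
  rwa [← sub_div, abs_div, abs_of_pos hr, div_lt_one hr] at this

lemma le_abs_sub_of_floor_div_ne (hr : 0 < r) (hne : ⌊a / r⌋ ≠ ⌊b / r⌋)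
    (hpar : (⌊a / r⌋ : ZMod 2) = ⌊b / r⌋) : r ≤ |a - b| := by
  have hdvd : (2 : ℤ) ∣ ⌊a / r⌋ - ⌊b / r⌋ := by
    simpa using (ZMod.intCast_eq_intCast_iff_dvd_sub _ _ 2).1 hpar.symm
  have htwo : (2 : ℝ) ≤ |(⌊a / r⌋ : ℝ) - ⌊b / r⌋| := by
    exact_mod_cast Int.le_of_dvd (abs_pos.2 (sub_ne_zero.2 hne)) ((dvd_abs _ _).2 hdvd)
  have hone : 1 ≤ |a / r - b / r| := by
    rw [le_abs'] at htwo ⊢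
    rcases htwo with h | h
    · left; linarith [Int.lt_floor_add_one (a / r), Int.floor_le (b / r)]
    · right; linarith [Int.floor_le (a / r), Int.lt_floor_add_one (b / r)]
  rwa [← sub_div, abs_div, abs_of_pos hr, one_le_div hr] at hone

end FloorDiv

theorem asdimLE_of_isometry_on_fibres {Y κ ι : Type*} [PseudoMetricSpace Y] [Finite κ]
    [Nonempty κ] [Fintype ι] (key : Y → κ) (f : Y → ι → ℝ)
    (hf_lip : ∀ x y, dist (f x) (f y) ≤ dist x y)
    (hf_fibre : ∀ x y, key x = key y → dist x y ≤ dist (f x) (f y)) :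
    AsdimLE Y (Nat.card (κ × (ι → ZMod 2)) - 1) := by
  refine AsdimLE.of_finite fun r hr => ?_
  let cube (c : κ) (b : ι → ℤ) : Set Y := {x | key x = c ∧ ∀ j, ⌊f x j / r⌋ = b j}
  refine ⟨fun ε => cube ε.1 '' {b | ∀ j, (b j : ZMod 2) = ε.2 j}, fun ε => ⟨r, ?_⟩,
    fun ε => ?_, fun x _ => ?_⟩
  · rintro _ ⟨b, -, rfl⟩ x ⟨hx, hxb⟩ y ⟨hy, hyb⟩
    refine (hf_fibre x y (hx.trans hy.symm)).trans ((dist_pi_le_iff hr.le).2 fun j => ?_)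
    rw [Real.dist_eq]
    exact (abs_sub_lt_of_floor_div_eq hr ((hxb j).trans (hyb j).symm)).le
  · rintro _ ⟨b, hb, rfl⟩ _ ⟨b', hb', rfl⟩ hne x ⟨-, hxb⟩ y ⟨-, hyb⟩
    obtain ⟨j, hj⟩ := Function.ne_iff.1 fun hbb : b = b' => hne (hbb ▸ rfl)
    have hsep : r ≤ |f x j - f y j| := by
      refine le_abs_sub_of_floor_div_ne hr ?_ ?_ <;> rw [hxb j, hyb j]
      · exact hj
      · rw [hb j, hb' j]
    calc r ≤ dist (f x j) (f y j) := by rwa [Real.dist_eq]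
      _ ≤ dist (f x) (f y) := dist_le_pi_dist _ _ j
      _ ≤ dist x y := hf_lip x y
  · exact mem_iUnion.2 ⟨(key x, fun j => (⌊f x j / r⌋ : ZMod 2)),
      cube (key x) fun j => ⌊f x j / r⌋, ⟨_, fun _ => rfl, rfl⟩, rfl, fun _ => rfl⟩

namespace Pt

variable {s : ℕ → ℕ} {k : ℕ}

lemma dist_eq (p q : Pt s k) :
    dist p q = max ‖(p.F.1 - q.F.1 : lp (fun _ : ℕ => ℝ) ∞)‖
      (max (dist p.F.2.1 q.F.2.1) |(TT p.level : ℝ) - TT q.level|) := by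
  show dist p.F q.F = _
  rw [Prod.dist_eq, Prod.dist_eq, dist_eq_norm, Real.dist_eq]
  rfl

lemma F_sub_apply (p q : Pt s k) (i : ℕ) :
    (p.F.1 - q.F.1 : lp (fun _ : ℕ => ℝ) ∞) i = (p.coords i : ℝ) - q.coords i :=
  rfl

lemma abs_coords_sub_le_dist (p q : Pt s k) (i : ℕ) :
    |(p.coords i : ℝ) - q.coords i| ≤ dist p q := by
  rw [dist_eq]
  refine le_max_of_le_left ?_
  have := lp.norm_apply_le_norm (E := fun _ : ℕ => ℝ) ENNReal.top_ne_zero (p.F.1 - q.F.1) i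
  rwa [F_sub_apply, Real.norm_eq_abs] at this

lemma abs_extra_sub_le_dist (p q : Pt s k) (j : Fin k) :
    |(p.extra j : ℝ) - q.extra j| ≤ dist p q := by
  rw [dist_eq, ← Real.dist_eq]
  exact le_max_of_le_right (le_max_of_le_left (dist_le_pi_dist p.F.2.1 q.F.2.1 j))

lemma abs_TT_sub_le_dist (p q : Pt s k) : |(TT p.level : ℝ) - TT q.level| ≤ dist p q := by
  rw [dist_eq]
  exact le_max_of_le_right (le_max_right _ _)

lemma dist_le {p q : Pt s k} {C : ℝ} (hC : 0 ≤ C)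
    (hcoords : ∀ i, |(p.coords i : ℝ) - q.coords i| ≤ C)
    (hextra : ∀ j, |(p.extra j : ℝ) - q.extra j| ≤ C)
    (hTT : |(TT p.level : ℝ) - TT q.level| ≤ C) :
    dist p q ≤ C := by
  rw [dist_eq]
  refine max_le ?_ (max_le ?_ hTT)
  · refine lp.norm_le_of_forall_le hC fun i => ?_
    rw [F_sub_apply, Real.norm_eq_abs]
    exact hcoords i
  · refine (dist_pi_le_iff hC).2 fun j => ?_
    rw [Real.dist_eq]
    exact hextra j

lemma level_le_dist_of_level_lt {p q : Pt s k} (h : p.level < q.level) :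
    (p.level : ℝ) ≤ dist p q := by
  have hTT : (TT p.level + p.level : ℝ) ≤ TT q.level := by exact_mod_cast TT_add_le_of_lt h
  calc (p.level : ℝ) ≤ |(TT p.level : ℝ) - TT q.level| := by
        rw [abs_sub_comm]; exact le_abs.2 (Or.inl (by linarith))
    _ ≤ dist p q := abs_TT_sub_le_dist p q

lemma le_dist_of_level_eq {p q : Pt s k} (hl : p.level = q.level) (hc : p.coords ≠ q.coords) :
    (s p.level : ℝ) ≤ dist p q := by
  obtain ⟨i, hi⟩ := Function.ne_iff.1 hc
  have hip : i < p.level := by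
    by_contra! h
    exact hi ((p.coords_eq_zero i h).trans (q.coords_eq_zero i (hl ▸ h)).symm)
  have hdvd : (s p.level : ℤ) ∣ p.coords i - q.coords i :=
    dvd_sub (p.coords_dvd i hip) (hl ▸ q.coords_dvd i (hl ▸ hip))
  have hle : (s p.level : ℤ) ≤ |p.coords i - q.coords i| :=
    Int.le_of_dvd (abs_pos.2 (sub_ne_zero.2 hi)) ((dvd_abs _ _).2 hdvd)
  calc (s p.level : ℝ) ≤ |(p.coords i : ℝ) - q.coords i| := by exact_mod_cast hle
    _ ≤ dist p q := abs_coords_sub_le_dist p q i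

lemma min_level_le_dist {p q : Pt (fun i => i) 0} (h : p ≠ q) :
    (min p.level q.level : ℝ) ≤ dist p q := by
  rcases lt_trichotomy p.level q.level with hl | hl | hl
  · exact (min_le_left _ _).trans (level_le_dist_of_level_lt hl)
  · have hc : p.coords ≠ q.coords := by
      intro hc
      cases p; cases q
      cases hl; cases hc
      exact h (by congr; exact Subsingleton.elim _ _)
    exact (min_le_left _ _).trans (le_dist_of_level_eq hl hc)
  · rw [dist_comm]
    exact (min_le_right _ _).trans (level_le_dist_of_level_lt hl)

theorem exists_asdimLE_of_level_le (N : ℕ) (S : Set (Pt s k)) (hS : ∀ x ∈ S, x.level ≤ N) :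
    ∃ m, AsdimLE S m := by
  let f (x : S) : Fin N ⊕ Fin k → ℝ :=
    Sum.elim (fun i => (x.1.coords i : ℝ)) fun j => (x.1.extra j : ℝ)
  refine ⟨_, asdimLE_of_isometry_on_fibres
    (fun x : S => (⟨x.1.level, Nat.lt_succ_of_le (hS x x.2)⟩ : Fin (N + 1))) f
    (fun x y => (dist_pi_le_iff dist_nonneg).2 ?_) fun x y hxy => ?_⟩
  · rintro (i | j)
    · exact abs_coords_sub_le_dist x.1 y.1 i
    · exact abs_extra_sub_le_dist x.1 y.1 j
  · have hl : x.1.level = y.1.level := congrArg Fin.val hxy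
    refine dist_le dist_nonneg (fun i => ?_) (fun j => ?_) (by simp [hl])
    · by_cases hi : i < N
      · simpa [f, Real.dist_eq] using dist_le_pi_dist (f x) (f y) (Sum.inl ⟨i, hi⟩)
      · have hN : N ≤ i := not_lt.1 hi
        simp [x.1.coords_eq_zero i ((hS x x.2).trans hN),
          y.1.coords_eq_zero i ((hS y y.2).trans hN)]
    · simpa [f, Real.dist_eq] using dist_le_pi_dist (f x) (f y) (Sum.inr j)

end Pt

/-- Example 3.1: the space `X = ⋃_{i≥1} (iℤ)^i` satisfies `coasdim X ≤ fin + 1`. -/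
theorem coasdim_union_iZ_le_fin_add_one : CoasdimLE (Pt (fun i => i) 0) 1 := by
  intro n _
  set N := ⌈n⌉₊
  set S : Set (Pt (fun i => i) 0) := {x | N < x.level}
  have hsep : S.Pairwise fun x y => n ≤ dist x y := fun x hx y hy hxy =>
    calc n ≤ N := Nat.le_ceil n
      _ ≤ (min x.level y.level : ℝ) := by exact_mod_cast le_min hx.le hy.le
      _ ≤ dist x y := Pt.min_level_le_dist hxy
  obtain ⟨m, hm⟩ := Pt.exists_asdimLE_of_level_le N Sᶜ fun x hx => not_lt.1 hx
  refine ⟨0, m, fun _ => (fun x => {x}) '' S, fun _ => rDisjoint_image_singleton hsep,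
    fun _ => rBounded_image_singleton S, ?_⟩
  have hcompl : (⋃ _ : Fin 1, ⋃₀ ((fun x => ({x} : Set _)) '' S))ᶜ = Sᶜ := by
    simp only [iUnion_const, sUnion_image, biUnion_of_singleton]
  rwa [hcompl]
end
end

section
/- Let $X$ be a metric space and $k\in\mathbb{N}$. If $\mathrm{coasdim}(X)\le fin+k$, then $\mathrm{trasdim}(X)\le\omega+k-1$. -/
/-!
Fix a `k`-element set `s ⊆ ℕ` and take `n > max s`. The hypothesis yields `k` families,
`n`-disjoint and bounded, one for each index in `s`, whose union has a complement `Y` of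
asymptotic dimension at most `m`. If `τ` is disjoint from `s` and has more than `m` elements,
the `m + 1` families covering `Y` (chosen `(max τ + 1)`-disjoint) can be assigned to indices in
`τ`, so `X` is covered along `s ∪ τ` and `s ∪ τ ∉ A(X)`. Thus the derivative of `A(X)` along
any `k`-element set has finite ordinal, the derivative along any `(k - 1)`-element set has
ordinal at most `ω`, and each element removed from the set adds at most one to this bound.
-/

noncomputable section
open Metric Set
open scoped ENNReal

/-- `M^a` in Borst's notation. -/
def Mder (M : Set (Finset ℕ)) (a : ℕ) : Set (Finset ℕ) :=
  {τ | insert a τ ∈ M ∧ a ∉ τ}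

/-- `OrdLE α M` means `Ord M ≤ α` in Borst's sense: `Ord M = 0` iff `M = ∅`, and
`Ord M ≤ α` iff `Ord M^a < α` for every `a ∈ ℕ`. -/
def OrdLE (α : Ordinal) (M : Set (Finset ℕ)) : Prop :=
  M = ∅ ∨ ∀ a : ℕ, ∃ β : {β : Ordinal // β < α}, OrdLE β.1 (Mder M a)
termination_by α
decreasing_by exact β.2

/-- The collection `A(X,d)` of finite sets `σ ⊆ ℕ` for which there are no uniformly
bounded families `U i` (`i ∈ σ`), each `i`-disjoint, whose union covers `X`. -/
def AColl (X : Type*) [PseudoMetricSpace X] : Set (Finset ℕ) :=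
  {σ | σ.Nonempty ∧ ¬ ∃ U : ℕ → Set (Set X),
    (∀ i ∈ σ, UniformlyBounded (U i)) ∧ (∀ i ∈ σ, RDisjoint (i : ℝ) (U i)) ∧
    (Set.univ : Set X) ⊆ ⋃ i ∈ σ, ⋃₀ U i}

section Ord

open Ordinal

variable {M : Set (Finset ℕ)}

theorem ordLE_iff {α : Ordinal} :
    OrdLE α M ↔ M = ∅ ∨ ∀ a : ℕ, ∃ β < α, OrdLE β (Mder M a) := by
  rw [OrdLE]
  simp only [Subtype.exists, exists_prop]

theorem ordLE_empty (α : Ordinal) : OrdLE α ∅ :=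
  ordLE_iff.mpr (Or.inl rfl)

theorem OrdLE.mono {α β : Ordinal} (h : OrdLE α M) (hαβ : α ≤ β) : OrdLE β M := by
  refine ordLE_iff.mpr ((ordLE_iff.mp h).imp_right fun hM a => ?_)
  obtain ⟨γ, hγ, hγM⟩ := hM a
  exact ⟨γ, hγ.trans_le hαβ, hγM⟩

theorem ordLE_of_forall_card_lt (N : ℕ) (hM : ∀ σ ∈ M, σ.card < N) : OrdLE N M := by
  induction N generalizing M with
  | zero => exact ordLE_iff.mpr (Or.inl (Set.eq_empty_of_forall_notMem fun σ hσ => by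
      simpa using hM σ hσ))
  | succ N ih =>
    refine ordLE_iff.mpr (Or.inr fun a => ⟨N, by exact_mod_cast N.lt_succ_self, ih ?_⟩)
    rintro τ ⟨hτ, haτ⟩
    simpa [Finset.card_insert_of_notMem haτ] using hM _ hτ

-- Borst's iterated derivative `M^s`: `Mder` taken successively along the elements of `s`.
def MderF (M : Set (Finset ℕ)) (s : Finset ℕ) : Set (Finset ℕ) :=
  {τ | s ∪ τ ∈ M ∧ Disjoint s τ}

@[simp]
theorem mderF_empty (M : Set (Finset ℕ)) : MderF M ∅ = M := by
  ext τ
  simp [MderF]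

theorem mder_mderF_of_mem {s : Finset ℕ} {a : ℕ} (ha : a ∈ s) : Mder (MderF M s) a = ∅ :=
  Set.eq_empty_of_forall_notMem fun _ ⟨⟨_, hs⟩, _⟩ =>
    Finset.disjoint_left.mp hs ha (Finset.mem_insert_self a _)

theorem mder_mderF_of_notMem {s : Finset ℕ} {a : ℕ} (ha : a ∉ s) :
    Mder (MderF M s) a = MderF M (insert a s) := by
  ext τ
  simp only [Mder, MderF, Set.mem_ofPred_eq, Finset.union_insert, Finset.insert_union,
    Finset.disjoint_insert_left, Finset.disjoint_insert_right, ha, not_false_eq_true, true_and]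
  tauto

theorem ordLE_mderF_of_forall_notMem {α : Ordinal} {s : Finset ℕ}
    (h : ∀ a ∉ s, ∃ β < α, OrdLE β (MderF M (insert a s))) : OrdLE α (MderF M s) := by
  obtain ⟨β₀, hβ₀, -⟩ := h _ (Infinite.exists_notMem_finset s).choose_spec
  refine ordLE_iff.mpr (Or.inr fun a => ?_)
  by_cases ha : a ∈ s
  · exact ⟨0, zero_le.trans_lt hβ₀, mder_mderF_of_mem ha ▸ ordLE_empty 0⟩
  · simpa only [mder_mderF_of_notMem ha] using h a ha

theorem ordLE_omega0_add_mderF {k : ℕ}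
    (hM : ∀ s : Finset ℕ, s.card = k → ∃ N : ℕ, ∀ τ ∈ MderF M s, τ.card ≤ N) (j : ℕ) :
    ∀ s : Finset ℕ, s.card + j + 1 = k → OrdLE (ω + j) (MderF M s) := by
  induction j with
  | zero =>
    refine fun s hs => ordLE_mderF_of_forall_notMem fun a ha => ?_
    obtain ⟨N, hN⟩ := hM (insert a s) (by rw [Finset.card_insert_of_notMem ha]; omega)
    exact ⟨N + 1, by simpa using natCast_lt_omega0 (N + 1),
      ordLE_of_forall_card_lt (N + 1) fun τ hτ => Nat.lt_succ_of_le (hN τ hτ)⟩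
  | succ j ih =>
    refine fun s hs => ordLE_mderF_of_forall_notMem fun a ha => ⟨ω + j, ?_, ih _ ?_⟩
    · exact_mod_cast (add_lt_add_iff_left ω).mpr (by exact_mod_cast j.lt_succ_self)
    · rw [Finset.card_insert_of_notMem ha]; omega

theorem ordLE_omega0_add_of_mderF_card_le {k : ℕ}
    (hM : ∀ s : Finset ℕ, s.card = k → ∃ N : ℕ, ∀ τ ∈ MderF M s, τ.card ≤ N) :
    OrdLE (ω + (k - 1 : ℕ)) M := by
  cases k with
  | zero =>
    obtain ⟨N, hN⟩ := hM ∅ rfl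
    simp only [mderF_empty] at hN
    exact (ordLE_of_forall_card_lt (N + 1) fun τ hτ => Nat.lt_succ_of_le (hN τ hτ)).mono
      (by simp)
  | succ j => simpa using ordLE_omega0_add_mderF hM j ∅ (by simp)

end Ord

section Coverable

variable {X : Type*} [PseudoMetricSpace X]

-- `AColl X` consists of the nonempty `σ` with `¬ Coverable σ univ`.
def Coverable (σ : Finset ℕ) (S : Set X) : Prop :=
  ∃ U : ℕ → Set (Set X), (∀ i ∈ σ, UniformlyBounded (U i)) ∧
    (∀ i ∈ σ, RDisjoint (i : ℝ) (U i)) ∧ S ⊆ ⋃ i ∈ σ, ⋃₀ U i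

theorem Coverable.mono_set {σ : Finset ℕ} {S T : Set X} (h : Coverable σ S) (hT : T ⊆ S) :
    Coverable σ T :=
  let ⟨U, hb, hd, hS⟩ := h
  ⟨U, hb, hd, hT.trans hS⟩

theorem RDisjoint.mono {r r' : ℝ} (h : r ≤ r') {U : Set (Set X)} (hU : RDisjoint r' U) :
    RDisjoint r U :=
  fun A hA B hB hne x hx y hy => h.trans (hU A hA B hB hne x hx y hy)

theorem uniformlyBounded_empty : UniformlyBounded (∅ : Set (Set X)) :=
  ⟨0, by simp [RBounded]⟩

theorem rDisjoint_empty (r : ℝ) : RDisjoint r (∅ : Set (Set X)) := by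
  simp [RDisjoint]

theorem coverable_iUnion {ι : Type*} {σ : Finset ℕ} {V : ι → Set (Set X)} (e : ι → ℕ)
    (he : Function.Injective e) (heσ : ∀ j, e j ∈ σ) (hb : ∀ j, UniformlyBounded (V j))
    (hd : ∀ j, RDisjoint (e j : ℝ) (V j)) : Coverable σ (⋃ j, ⋃₀ V j) := by
  classical
  have extend_of_not_mem : ∀ i ∉ Set.range e, Function.extend e V (fun _ => ∅) i = ∅ :=
    fun i hi => Function.extend_apply' _ _ _ hi
  refine ⟨Function.extend e V fun _ => ∅, fun i _ => ?_, fun i _ => ?_, ?_⟩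
  · by_cases hi : i ∈ Set.range e
    · obtain ⟨j, rfl⟩ := hi
      simpa [he.extend_apply] using hb j
    · simpa [extend_of_not_mem i hi] using uniformlyBounded_empty
  · by_cases hi : i ∈ Set.range e
    · obtain ⟨j, rfl⟩ := hi
      simpa [he.extend_apply] using hd j
    · simpa [extend_of_not_mem i hi] using rDisjoint_empty (i : ℝ)
  · refine Set.iUnion_subset fun j => ?_
    rw [← he.extend_apply V (fun _ => ∅) j]
    exact Set.subset_biUnion_of_mem (u := fun i => ⋃₀ Function.extend e V (fun _ => ∅) i)
      (heσ j)

theorem Coverable.union {σ τ : Finset ℕ} {S T : Set X} (hS : Coverable σ S) (hT : Coverable τ T)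
    (hστ : Disjoint σ τ) : Coverable (σ ∪ τ) (S ∪ T) := by
  classical
  obtain ⟨U, hUb, hUd, hUS⟩ := hS
  obtain ⟨V, hVb, hVd, hVT⟩ := hT
  have mem_τ : ∀ i ∈ σ ∪ τ, i ∉ σ → i ∈ τ := fun i hi hiσ =>
    (Finset.mem_union.mp hi).resolve_left hiσ
  refine ⟨fun i => if i ∈ σ then U i else V i, fun i hi => ?_, fun i hi => ?_, ?_⟩
  · dsimp only; split_ifs with hiσ
    exacts [hUb i hiσ, hVb i (mem_τ i hi hiσ)]
  · dsimp only; split_ifs with hiσ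
    exacts [hUd i hiσ, hVd i (mem_τ i hi hiσ)]
  · refine Set.union_subset (hUS.trans ?_) (hVT.trans ?_) <;>
      refine Set.iUnion₂_subset fun i hi => ?_
    · exact Set.subset_biUnion_of_mem (u := fun i => ⋃₀ (if i ∈ σ then U i else V i))
        (Finset.mem_union_left τ hi) |>.trans' (by simp [hi])
    · exact Set.subset_biUnion_of_mem (u := fun i => ⋃₀ (if i ∈ σ then U i else V i))
        (Finset.mem_union_right σ hi) |>.trans' (by simp [Finset.disjoint_right.mp hστ hi])

theorem Isometry.coverable_image {Y : Type*} [PseudoMetricSpace Y] {f : Y → X} (hf : Isometry f)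
    {σ : Finset ℕ} {S : Set Y} (hS : Coverable σ S) : Coverable σ (f '' S) := by
  obtain ⟨U, hb, hd, hcov⟩ := hS
  refine ⟨fun i => Set.image f '' U i, fun i hi => ?_, fun i hi => ?_, ?_⟩
  · obtain ⟨R, hR⟩ := hb i hi
    refine ⟨R, ?_⟩
    rintro _ ⟨A, hA, rfl⟩ _ ⟨x, hx, rfl⟩ _ ⟨y, hy, rfl⟩
    simpa [hf.dist_eq] using hR A hA x hx y hy
  · rintro _ ⟨A, hA, rfl⟩ _ ⟨B, hB, rfl⟩ hne _ ⟨x, hx, rfl⟩ _ ⟨y, hy, rfl⟩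
    simpa [hf.dist_eq] using hd i hi A hA B hB (fun h => hne (h ▸ rfl)) x hx y hy
  · rintro _ ⟨x, hx, rfl⟩
    obtain ⟨i, hi, A, hA, hxA⟩ : ∃ i ∈ σ, ∃ A ∈ U i, x ∈ A := by simpa using hcov hx
    exact Set.mem_biUnion hi ⟨f '' A, Set.mem_image_of_mem _ hA, Set.mem_image_of_mem f hxA⟩

theorem exists_card_le_of_mem_mderF_aColl {k : ℕ}
    (h : CoasdimLE X k) {s : Finset ℕ} (hs : s.card = k) :
    ∃ N : ℕ, ∀ τ ∈ MderF (AColl X) s, τ.card ≤ N := by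
  obtain ⟨R, m, V, hVd, hVb, hY⟩ := h (s.sup id + 1) (by positivity)
  refine ⟨m, fun τ ⟨hτ, hsτ⟩ => ?_⟩
  by_contra! hcard
  obtain ⟨t, htτ, ht⟩ := Finset.exists_subset_card_eq (Nat.succ_le_of_lt hcard)
  obtain ⟨W, hWb, hWd, hWcov⟩ := hY (τ.sup id + 1) (by positivity)
  have le_sup_add_one : ∀ {σ : Finset ℕ} {i : ℕ}, i ∈ σ → (i : ℝ) ≤ σ.sup id + 1 :=
    fun hi => by exact_mod_cast (Finset.le_sup (f := id) hi).trans (Nat.le_succ _)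
  have hsV : Coverable s (⋃ j, ⋃₀ V j) :=
    coverable_iUnion _ (s.orderEmbOfFin hs).injective (s.orderEmbOfFin_mem hs)
      (fun j => ⟨R, hVb j⟩) fun j => (hVd j).mono (le_sup_add_one (s.orderEmbOfFin_mem hs j))
  have htW : Coverable τ (Set.univ : Set ((⋃ j, ⋃₀ V j)ᶜ : Set X)) :=
    (coverable_iUnion _ (t.orderEmbOfFin ht).injective (fun j => htτ (t.orderEmbOfFin_mem ht j))
      hWb fun j => (hWd j).mono (le_sup_add_one (htτ (t.orderEmbOfFin_mem ht j)))).mono_set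
      hWcov
  refine hτ.2 ((hsV.union (isometry_subtype_coe.coverable_image htW) hsτ).mono_set ?_)
  rw [Set.image_univ, Subtype.range_coe, Set.union_compl_self]

end Coverable

theorem trasdim_le_of_coasdim_general {X : Type*} [PseudoMetricSpace X] (k : ℕ)
    (h : CoasdimLE X k) :
    OrdLE (Ordinal.omega0 + ((k - 1 : ℕ) : Ordinal)) (AColl X) :=
  ordLE_omega0_add_of_mderF_card_le fun _ hs => exists_card_le_of_mem_mderF_aColl h hs

/-- Theorem 3.5: `coasdim X ≤ fin + k` implies `trasdim X ≤ ω + k - 1`. -/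
theorem trasdim_le_of_coasdim {X : Type*} [PseudoMetricSpace X] (k : ℕ) (hk : 1 ≤ k)
    (h : CoasdimLE X k) :
    OrdLE (Ordinal.omega0 + ((k - 1 : ℕ) : Ordinal)) (AColl X) :=
  trasdim_le_of_coasdim_general k h
end
end

section
/- Let $X$ and $Y$ be metric spaces, $\phi:X\to Y$ a coarse embedding, and $k\in\mathbb{N}$. If $\mathrm{coasdim}(Y)\le fin+k$, then $\mathrm{coasdim}(X)\le fin+k$. In particular, if $X\subseteq Y$ and $\mathrm{coasdim}(Y)\le fin+k$, then $\mathrm{coasdim}(X)\le fin+k$. -/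
noncomputable section
open Metric Set
open scoped ENNReal

/-- Coarse embedding. -/
def CoarseEmbedding {X Y : Type*} [PseudoMetricSpace X] [PseudoMetricSpace Y]
    (f : X → Y) : Prop :=
  ∃ ρ₁ ρ₂ : ℝ → ℝ, Monotone ρ₁ ∧ Monotone ρ₂ ∧
    Filter.Tendsto ρ₁ Filter.atTop Filter.atTop ∧
    Filter.Tendsto ρ₂ Filter.atTop Filter.atTop ∧
    ∀ x x' : X, ρ₁ (dist x x') ≤ dist (f x) (f x') ∧ dist (f x) (f x') ≤ ρ₂ (dist x x')


lemma asdimLE_of_coarse {X Y : Type*} [PseudoMetricSpace X] [PseudoMetricSpace Y]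
    (f : X → Y) (hf : CoarseEmbedding f) {m : ℕ} (h : AsdimLE Y m) : AsdimLE X m := by
  obtain ⟨ρ₁, ρ₂, hm1, hm2, ht1, _, hb⟩ := hf
  intro r hr
  set r' : ℝ := max (ρ₂ r + 1) 1 with hr'def
  have hr' : 0 < r' := lt_of_lt_of_le one_pos (le_max_right _ _)
  obtain ⟨U, hbd, hdisj, hcov⟩ := h r' hr'
  refine ⟨fun i => (Set.preimage f) '' (U i), ?_, ?_, ?_⟩
  · intro i
    obtain ⟨R, hR⟩ := hbd i
    obtain ⟨S, hS⟩ := (ht1.eventually (Filter.eventually_gt_atTop R)).exists_forall_of_atTop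
    refine ⟨max S 0, ?_⟩
    rintro A' ⟨A, hA, rfl⟩ x hx y hy
    by_contra hgt
    push_neg at hgt
    have h1 : ρ₁ (dist x y) > R := hS _ (le_trans (le_max_left _ _) hgt.le)
    have h2 : dist (f x) (f y) ≤ R := hR A hA _ hx _ hy
    exact absurd (le_trans (hb x y).1 h2) (not_le.mpr h1)
  · intro i
    rintro A' ⟨A, hA, rfl⟩ B' ⟨B, hB, rfl⟩ hne x hx y hy
    have hABne : A ≠ B := by rintro rfl; exact hne rfl
    have hfar : r' ≤ dist (f x) (f y) := hdisj i A hA B hB hABne _ hx _ hy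
    by_contra hlt
    push_neg at hlt
    have : dist (f x) (f y) ≤ ρ₂ r := le_trans (hb x y).2 (hm2 hlt.le)
    have : r' ≤ ρ₂ r := le_trans hfar this
    have : ρ₂ r + 1 ≤ ρ₂ r := le_trans (le_max_left _ _) this
    linarith
  · intro x _
    obtain ⟨_, ⟨i, rfl⟩, A, hA, hfx⟩ := hcov (Set.mem_univ (f x))
    exact Set.mem_iUnion.mpr ⟨i, ⟨f ⁻¹' A, ⟨A, hA, rfl⟩, hfx⟩⟩

/-- Proposition 3.7: coarse invariance of complementary-finite asymptotic dimension. -/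
theorem coasdim_le_of_coarseEmbedding {X Y : Type*} [PseudoMetricSpace X] [PseudoMetricSpace Y]
    (φ : X → Y) (hφ : CoarseEmbedding φ) (k : ℕ) (hY : CoasdimLE Y k) : CoasdimLE X k := by
  obtain ⟨ρ₁, ρ₂, hm1, hm2, ht1, ht2, hb⟩ := hφ
  intro n hn
  set n' : ℝ := max (ρ₂ n + 1) 1 with hn'def
  have hn' : 0 < n' := lt_of_lt_of_le one_pos (le_max_right _ _)
  obtain ⟨R, m, U, hdisj, hbd, hasdim⟩ := hY n' hn'
  obtain ⟨S, hS⟩ := (ht1.eventually (Filter.eventually_gt_atTop R)).exists_forall_of_atTop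
  refine ⟨max S 0, m, fun i => (Set.preimage φ) '' (U i), ?_, ?_, ?_⟩
  · intro i
    rintro A' ⟨A, hA, rfl⟩ B' ⟨B, hB, rfl⟩ hne x hx y hy
    have hABne : A ≠ B := by rintro rfl; exact hne rfl
    have hfar : n' ≤ dist (φ x) (φ y) := hdisj i A hA B hB hABne _ hx _ hy
    by_contra hlt
    push_neg at hlt
    have : dist (φ x) (φ y) ≤ ρ₂ n := le_trans (hb x y).2 (hm2 hlt.le)
    have : n' ≤ ρ₂ n := le_trans hfar this
    have : ρ₂ n + 1 ≤ ρ₂ n := le_trans (le_max_left _ _) this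
    linarith
  · intro i
    rintro A' ⟨A, hA, rfl⟩ x hx y hy
    by_contra hgt
    push_neg at hgt
    have h1 : ρ₁ (dist x y) > R := hS _ (le_trans (le_max_left _ _) hgt.le)
    have h2 : dist (φ x) (φ y) ≤ R := hbd i A hA _ hx _ hy
    exact absurd (le_trans (hb x y).1 h2) (not_le.mpr h1)
  · -- restrict φ to complements
    set CX : Set X := (⋃ i, ⋃₀ ((Set.preimage φ) '' (U i)))ᶜ
    set CY : Set Y := (⋃ i, ⋃₀ U i)ᶜ
    have hmap : ∀ x : CX, φ x.1 ∈ CY := by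
      rintro ⟨x, hx⟩
      intro hmem
      obtain ⟨_, ⟨i, rfl⟩, A, hA, hfx⟩ := hmem
      exact hx (Set.mem_iUnion.mpr ⟨i, ⟨φ ⁻¹' A, ⟨A, hA, rfl⟩, hfx⟩⟩)
    refine asdimLE_of_coarse (fun x : CX => (⟨φ x.1, hmap x⟩ : CY)) ?_ hasdim
    refine ⟨ρ₁, ρ₂, hm1, hm2, ht1, ht2, ?_⟩
    intro x x'
    simpa [Subtype.dist_eq] using hb x.1 x'.1
end
end

section
/- Let $f:X\to Y$ be a 1-Lipschitz map from a geodesic metric space $X$ to a metric space $Y$. Suppose that for every $R>0$ the family $\{f^{-1}(B_R(y))\}_{y\in Y}$ satisfies $\mathrm{asdim}\le m$ uniformly, and that $\mathrm{coasdim}(Y)\le fin+k$. Then $\mathrm{coasdim}(X)\le fin+k(m+1)$. -/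
noncomputable section
open Metric Set
open scoped ENNReal

/-- A family of subsets `s α ⊆ X` satisfies `asdim ≤ m` uniformly. -/
def AsdimLEUnif {X : Type*} [PseudoMetricSpace X] {ι : Type*} (s : ι → Set X) (m : ℕ) : Prop :=
  ∀ r : ℝ, 0 < r → ∃ R : ℝ, ∀ α, ∃ U : Fin (m + 1) → Set (Set X),
    (∀ i, RDisjoint r (U i)) ∧ (∀ i, RBounded R (U i)) ∧ s α ⊆ ⋃ i, ⋃₀ U i

/-- A geodesic metric space: any two points are joined by an isometrically embedded segment. -/
def GeodesicMetricSpace (X : Type*) [PseudoMetricSpace X] : Prop :=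
  ∀ x y : X, ∃ γ : ℝ → X, γ 0 = x ∧ γ (dist x y) = y ∧
    ∀ s ∈ Set.Icc (0 : ℝ) (dist x y), ∀ t ∈ Set.Icc (0 : ℝ) (dist x y),
      dist (γ s) (γ t) = |s - t|

/-! Over each bounded piece `A` of an `r`-disjoint family in `Y`, the preimage `f⁻¹' A` lies in the
preimage of a ball of fixed radius, which splits into `m + 1` uniformly bounded `r`-disjoint families.
Intersecting these with `f⁻¹' A` keeps pieces over different `A` `r`-apart, because `f` is
`1`-Lipschitz. Doing this for each of the `k` families of a coarse decomposition of `Y` gives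
`k (m + 1)` families in `X`; the complement of their union maps into the complement in `Y`, whose
finite asymptotic dimension is pulled back by the same construction. -/

lemma RBounded.mono {X : Type*} [PseudoMetricSpace X] {R R' : ℝ} {U : Set (Set X)}
    (h : RBounded R U) (hRR' : R ≤ R') : RBounded R' U :=
  fun A hA x hx y hy => (h A hA x hx y hy).trans hRR'

lemma exists_rBounded_of_uniformlyBounded {X : Type*} [PseudoMetricSpace X] {ι : Type*}
    [Finite ι] {U : ι → Set (Set X)} (h : ∀ i, UniformlyBounded (U i)) :
    ∃ R, ∀ i, RBounded R (U i) := by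
  choose R hR using h
  obtain ⟨R₀, hR₀⟩ := (finite_range R).bddAbove
  exact ⟨R₀, fun i => (hR i).mono (hR₀ (mem_range_self i))⟩

lemma AsdimLEUnif.comp {X : Type*} [PseudoMetricSpace X] {ι κ : Type*} {s : ι → Set X} {m : ℕ}
    (h : AsdimLEUnif s m) (t : κ → ι) : AsdimLEUnif (s ∘ t) m :=
  fun r hr => let ⟨R, hR⟩ := h r hr; ⟨R, fun j => hR (t j)⟩

lemma AsdimLEUnif.preimage_val {X : Type*} [PseudoMetricSpace X] {ι : Type*} {s : ι → Set X}
    {m : ℕ} (h : AsdimLEUnif s m) (C : Set X) :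
    AsdimLEUnif (fun i => (Subtype.val ⁻¹' s i : Set C)) m := by
  intro r hr
  obtain ⟨R, hR⟩ := h r hr
  refine ⟨R, fun α => ?_⟩
  obtain ⟨U, hUd, hUb, hUc⟩ := hR α
  refine ⟨fun j => preimage Subtype.val '' U j, ?_, ?_, ?_⟩
  · rintro j _ ⟨A, hA, rfl⟩ _ ⟨B, hB, rfl⟩ hne x hx y hy
    exact hUd j A hA B hB (ne_of_apply_ne _ hne) x hx y hy
  · rintro j _ ⟨A, hA, rfl⟩ x hx y hy
    exact hUb j A hA x hx y hy
  · intro x hx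
    obtain ⟨_, ⟨j, rfl⟩, A, hA, hxA⟩ := hUc hx
    exact mem_iUnion.2 ⟨j, _, ⟨A, hA, rfl⟩, hxA⟩

section Pullback

variable {X Y : Type*} [PseudoMetricSpace X] [PseudoMetricSpace Y] {f : X → Y} {m : ℕ}

theorem exists_preimage_cover (hf : LipschitzWith 1 f)
    (hfib : ∀ ρ : ℝ, 0 < ρ → AsdimLEUnif (fun y : Y => f ⁻¹' ball y ρ) m)
    {r : ℝ} (hr : 0 < r) (R : ℝ) :
    ∃ R', ∀ V : Set (Set Y), RDisjoint r V → RBounded R V →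
      ∃ W : Fin (m + 1) → Set (Set X), (∀ j, RDisjoint r (W j)) ∧ (∀ j, RBounded R' (W j)) ∧
        f ⁻¹' ⋃₀ V ⊆ ⋃ j, ⋃₀ W j := by
  obtain ⟨R', hR'⟩ := hfib (|R| + 1) (by positivity) r hr
  choose g hgd hgb hgc using hR'
  refine ⟨R', fun V hVd hVb => ?_⟩
  -- one centre per piece, so that all pieces cut out of the same `A` come from one `r`-disjoint family
  choose c hc using fun A : {A // A ∈ V ∧ A.Nonempty} => A.2.2
  refine ⟨fun j => {Q | ∃ A, ∃ P ∈ g (c A) j, Q = P ∩ f ⁻¹' A.1}, ?_, ?_, ?_⟩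
  · rintro j _ ⟨A, P, hP, rfl⟩ _ ⟨B, P', hP', rfl⟩ hne x hx y hy
    by_cases hAB : A = B
    · subst hAB
      exact hgd (c A) j P hP P' hP' (by rintro rfl; exact hne rfl) x hx.1 y hy.1
    · calc r ≤ dist (f x) (f y) :=
            hVd A A.2.1 B B.2.1 (Subtype.coe_ne_coe.2 hAB) _ hx.2 _ hy.2
        _ ≤ dist x y := by simpa using hf.dist_le_mul x y
  · rintro j _ ⟨A, P, hP, rfl⟩ x hx y hy
    exact hgb (c A) j P hP x hx.1 y hy.1
  · rintro x ⟨A, hAV, hfxA⟩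
    let A' : {A // A ∈ V ∧ A.Nonempty} := ⟨A, hAV, f x, hfxA⟩
    have hball : x ∈ f ⁻¹' ball (c A') (|R| + 1) := by
      have := (hVb A hAV (f x) hfxA (c A') (hc A')).trans (le_abs_self R)
      rw [mem_preimage, mem_ball]
      linarith
    obtain ⟨_, ⟨j, rfl⟩, P, hP, hxP⟩ := hgc (c A') hball
    exact mem_iUnion.2 ⟨j, _, ⟨A', P, hP, rfl⟩, hxP, hfxA⟩

theorem exists_preimage_cover_fin (hf : LipschitzWith 1 f)
    (hfib : ∀ ρ : ℝ, 0 < ρ → AsdimLEUnif (fun y : Y => f ⁻¹' ball y ρ) m)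
    {r : ℝ} (hr : 0 < r) (R : ℝ) :
    ∃ R', ∀ {k : ℕ} (V : Fin k → Set (Set Y)), (∀ i, RDisjoint r (V i)) →
      (∀ i, RBounded R (V i)) →
      ∃ U : Fin (k * (m + 1)) → Set (Set X), (∀ l, RDisjoint r (U l)) ∧
        (∀ l, RBounded R' (U l)) ∧ f ⁻¹' ⋃ i, ⋃₀ V i ⊆ ⋃ l, ⋃₀ U l := by
  obtain ⟨R', hR'⟩ := exists_preimage_cover hf hfib hr R
  refine ⟨R', fun V hVd hVb => ?_⟩
  choose W hWd hWb hWc using fun i => hR' (V i) (hVd i) (hVb i)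
  refine ⟨fun l => W (finProdFinEquiv.symm l).1 (finProdFinEquiv.symm l).2,
    fun l => hWd _ _, fun l => hWb _ _, ?_⟩
  beta_reduce
  rw [preimage_iUnion, finProdFinEquiv.symm.surjective.iUnion_comp (fun p => ⋃₀ W p.1 p.2),
    iUnion_prod']
  exact iUnion_mono hWc

theorem asdimLE_of_lipschitz (hf : LipschitzWith 1 f)
    (hfib : ∀ ρ : ℝ, 0 < ρ → AsdimLEUnif (fun y : Y => f ⁻¹' ball y ρ) m)
    {n : ℕ} (hY : AsdimLE Y n) : AsdimLE X (n * (m + 1) + m) := by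
  intro r hr
  obtain ⟨V, hVub, hVd, hVc⟩ := hY r hr
  obtain ⟨R, hVb⟩ := exists_rBounded_of_uniformlyBounded hVub
  obtain ⟨R', hR'⟩ := exists_preimage_cover_fin hf hfib hr R
  obtain ⟨U, hUd, hUb, hUc⟩ := hR' V hVd hVb
  rw [show n * (m + 1) + m + 1 = (n + 1) * (m + 1) by ring]
  refine ⟨U, fun l => ⟨R', hUb l⟩, hUd, ?_⟩
  simpa [univ_subset_iff.1 hVc] using hUc

theorem asdimLE_of_mapsTo (hf : LipschitzWith 1 f)
    (hfib : ∀ ρ : ℝ, 0 < ρ → AsdimLEUnif (fun y : Y => f ⁻¹' ball y ρ) m)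
    {C : Set X} {D : Set Y} (hCD : MapsTo f C D) {n : ℕ} (hD : AsdimLE D n) :
    AsdimLE C (n * (m + 1) + m) :=
  asdimLE_of_lipschitz (f := hCD.restrict)
    (LipschitzWith.of_dist_le_mul fun x y => hf.dist_le_mul x y)
    (fun ρ hρ => ((hfib ρ hρ).preimage_val C).comp Subtype.val) hD

end Pullback

theorem coasdim_hurewicz_general {X Y : Type*} [PseudoMetricSpace X] [PseudoMetricSpace Y]
    (f : X → Y) (hf : LipschitzWith 1 f) (m k : ℕ)
    (hfib : ∀ R : ℝ, 0 < R → AsdimLEUnif (fun y : Y => f ⁻¹' Metric.ball y R) m)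
    (hY : CoasdimLE Y k) :
    CoasdimLE X (k * (m + 1)) := by
  intro n hn
  obtain ⟨RY, mY, V, hVd, hVb, hYc⟩ := hY n hn
  obtain ⟨R', hR'⟩ := exists_preimage_cover_fin hf hfib hn RY
  obtain ⟨U, hUd, hUb, hUc⟩ := hR' V hVd hVb
  refine ⟨R', mY * (m + 1) + m, U, hUd, hUb, asdimLE_of_mapsTo hf hfib ?_ hYc⟩
  exact fun x hx hfx => hx (hUc hfx)

/-- Theorem 3.16 (Hurewicz-type theorem for coasdim). -/
theorem coasdim_hurewicz {X Y : Type*} [PseudoMetricSpace X] [PseudoMetricSpace Y]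
    (f : X → Y) (hgeo : GeodesicMetricSpace X) (hf : LipschitzWith 1 f) (m k : ℕ)
    (hfib : ∀ R : ℝ, 0 < R → AsdimLEUnif (fun y : Y => f ⁻¹' Metric.ball y R) m)
    (hY : CoasdimLE Y k) :
    CoasdimLE X (k * (m + 1)) :=
  coasdim_hurewicz_general f hf m k hfib hY
end
end
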